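/- Let the Fourier transforms of the symbol satisfy 𝓥̂_q(-p) = 𝓥̂_q(p) ∈ ℝ for all p ∈ ℝ and q ∈ ℤ^l, and suppose Σ_q ∫_ℝ |𝓥̂_q(p)| dp < ∞. Define the antilinear operator 𝓟𝓣 on L²(𝕋^l) by (𝓟𝓣 f)(x) = conj(f(-x)). Then the Weyl quantization V of 𝓥_ω is 𝓟𝓣-symmetric: (𝓟𝓣)(Vf) = V(𝓟𝓣 f) for every f ∈ L²(𝕋^l), i.e. [V, 𝓟𝓣] = 0. -/

import Mathlib

open MeasureTheory Complex Real

noncomputable section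

instance : Fact (0 < 2 * π) := ⟨by positivity⟩

/-- The torus `𝕋^l = (ℝ/2πℤ)^l`. -/
abbrev TorusPt (l : ℕ) := Fin l → AddCircle (2 * π)

/-- `e^{i⟨q,x⟩}` for `q ∈ ℤ^l` and `x ∈ 𝕋^l`. -/
def torusChar {l : ℕ} (q : Fin l → ℤ) (x : TorusPt l) : ℂ :=
  ∏ j, (AddCircle.toCircle ((q j) • x j) : ℂ)

/-- The Weyl quantization `V` of the symbol `𝓥_ω(ξ,x) = 𝓥(⟨ω,ξ⟩,x)`, given through the
Fourier data `𝓥̂_q(p)`, `p ∈ ℝ`: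
`(Vf)(x) = ∫_ℝ Σ_q 𝓥̂_q(p) e^{i(⟨q,x⟩+ℏp⟨ω,q⟩/2)} f(x+ℏpω) dp`. -/
def weylOpOmega (l : ℕ) (ω : Fin l → ℝ) (ℏ : ℝ) (Vhat : (Fin l → ℤ) → ℝ → ℂ)
    (f : TorusPt l → ℂ) (x : TorusPt l) : ℂ :=
  ∫ p : ℝ, ∑' q : Fin l → ℤ,
    Vhat q p * torusChar q x *
      Complex.exp (Complex.I * (ℏ * p * (∑ j, ω j * (q j : ℝ)) / 2)) *
      f (fun j => x j + ((ℏ * p * ω j : ℝ) : AddCircle (2 * π)))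

/-- The antilinear operator `𝓟𝓣` on functions on the torus: `(𝓟𝓣 f)(x) = conj (f (-x))`. -/
def PTop {l : ℕ} (f : TorusPt l → ℂ) : TorusPt l → ℂ :=
  fun x => (starRingEnd ℂ) (f (-x))

/-!
Conjugating the summand of `V` at `(-x, p)` gives the summand of `V (𝓟𝓣 f)` at `(x, -p)`:
the character and the phase `e^{iℏp⟨ω,q⟩/2}` are conjugated, `f (-x + ℏpω)` becomes
`(𝓟𝓣 f)(x + ℏ(-p)ω)`, and `conj 𝓥̂_q(p) = 𝓥̂_q(-p)` because `𝓥̂_q` is real and even.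
Conjugation commutes with `∑'` and `∫`, and Lebesgue measure on `ℝ` is invariant under `p ↦ -p`.
-/

open ComplexConjugate

lemma AddCircle.coe_toCircle_neg {T : ℝ} (a : AddCircle T) :
    (AddCircle.toCircle (-a) : ℂ) = conj (AddCircle.toCircle a : ℂ) := by
  rw [AddCircle.toCircle_neg, Circle.coe_inv_eq_conj]

lemma torusChar_neg {l : ℕ} (q : Fin l → ℤ) (x : TorusPt l) :
    torusChar q (-x) = conj (torusChar q x) := by
  simp only [torusChar, map_prod, Pi.neg_apply, smul_neg, AddCircle.coe_toCircle_neg]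

section WeylSummand

variable {l : ℕ} (ω : Fin l → ℝ) (ℏ : ℝ) (Vhat : (Fin l → ℤ) → ℝ → ℂ)

def weylSummand (f : TorusPt l → ℂ) (x : TorusPt l) (p : ℝ) (q : Fin l → ℤ) : ℂ :=
  Vhat q p * torusChar q x *
    Complex.exp (Complex.I * (ℏ * p * (∑ j, ω j * (q j : ℝ)) / 2)) *
    f (fun j => x j + ((ℏ * p * ω j : ℝ) : AddCircle (2 * π)))

lemma conj_weylSummand_neg (hsym : ∀ q p, Vhat q (-p) = Vhat q p)
    (hreal : ∀ q p, (Vhat q p).im = 0) (f : TorusPt l → ℂ) (x : TorusPt l) (p : ℝ)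
    (q : Fin l → ℤ) :
    conj (weylSummand ω ℏ Vhat f (-x) p q) = weylSummand ω ℏ Vhat (PTop f) x (-p) q := by
  have hV : conj (Vhat q p) = Vhat q (-p) := by
    rw [hsym, Complex.conj_eq_iff_im.mpr (hreal q p)]
  have hphase : conj (Complex.exp (Complex.I * (ℏ * p * (∑ j, ω j * (q j : ℝ)) / 2))) =
      Complex.exp (Complex.I * (ℏ * (-p : ℝ) * (∑ j, ω j * (q j : ℝ)) / 2)) := by
    rw [← Complex.exp_conj]
    congr 1
    simp only [map_mul, map_div₀, Complex.conj_I, Complex.conj_ofReal, map_ofNat]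
    push_cast
    ring
  have hshift : (fun j => (-x) j + ((ℏ * p * ω j : ℝ) : AddCircle (2 * π))) =
      -(fun j => x j + ((ℏ * (-p) * ω j : ℝ) : AddCircle (2 * π))) := by
    funext j
    simp only [Pi.neg_apply, neg_add, ← AddCircle.coe_neg]
    ring_nf
  simp only [weylSummand, PTop, map_mul, hV, torusChar_neg, Complex.conj_conj, hphase, hshift]

end WeylSummand

theorem weyl_quantization_PT_symmetric_general
    (l : ℕ) (ω : Fin l → ℝ) (ℏ : ℝ)
    (Vhat : (Fin l → ℤ) → ℝ → ℂ)
    (hsym : ∀ (q : Fin l → ℤ) (p : ℝ), Vhat q (-p) = Vhat q p)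
    (hreal : ∀ (q : Fin l → ℤ) (p : ℝ), (Vhat q p).im = 0) :
    ∀ f : TorusPt l → ℂ, MemLp f 2 (volume : Measure (TorusPt l)) →
      ∀ x : TorusPt l,
        PTop (weylOpOmega l ω ℏ Vhat f) x = weylOpOmega l ω ℏ Vhat (PTop f) x := by
  intro f _ x
  calc PTop (weylOpOmega l ω ℏ Vhat f) x
      = conj (∫ p, ∑' q, weylSummand ω ℏ Vhat f (-x) p q) := rfl
    _ = ∫ p, ∑' q, conj (weylSummand ω ℏ Vhat f (-x) p q) := by
        rw [← integral_conj]
        simp only [starRingEnd_apply, tsum_star]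
    _ = ∫ p, ∑' q, weylSummand ω ℏ Vhat (PTop f) x (-p) q := by
        simp only [conj_weylSummand_neg ω ℏ Vhat hsym hreal]
    _ = weylOpOmega l ω ℏ Vhat (PTop f) x :=
        integral_neg_eq_self (fun p => ∑' q, weylSummand ω ℏ Vhat (PTop f) x p q) volume

/-- Remark 1.3: if `𝓥̂_q(-p) = 𝓥̂_q(p) ∈ ℝ` for all `p, q` (and the Fourier
data is summable), then the Weyl quantization `V` of `𝓥_ω` is `𝓟𝓣`-symmetric:
`𝓟𝓣(Vf) = V(𝓟𝓣 f)` for every `f ∈ L²(𝕋^l)`, i.e. `[V,𝓟𝓣] = 0`. -/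
theorem weyl_quantization_PT_symmetric
    (l : ℕ) (hl : 1 ≤ l) (ω : Fin l → ℝ) (ℏ : ℝ) (hℏ : ℏ ∈ Set.Icc (0 : ℝ) 1)
    (Vhat : (Fin l → ℤ) → ℝ → ℂ)
    (hmeas : ∀ q, Measurable (Vhat q))
    (hL1 : (∑' q : Fin l → ℤ, ∫⁻ p : ℝ, (‖Vhat q p‖₊ : ENNReal)) < ⊤)
    (hsym : ∀ (q : Fin l → ℤ) (p : ℝ), Vhat q (-p) = Vhat q p)
    (hreal : ∀ (q : Fin l → ℤ) (p : ℝ), (Vhat q p).im = 0) :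
    ∀ f : TorusPt l → ℂ, MemLp f 2 (volume : Measure (TorusPt l)) →
      ∀ x : TorusPt l,
        PTop (weylOpOmega l ω ℏ Vhat f) x = weylOpOmega l ω ℏ Vhat (PTop f) x :=
  weyl_quantization_PT_symmetric_general l ω ℏ Vhat hsym hreal

end
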